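/- Let k ≥ 2 be an integer and set s = (k+1)/(2k). For every t ∈ [0,1]: 2·φ⁺(s,t) − 1 = (1−2t)/k + 2√((1 − 1/k²)·t·(1−t)). Moreover, if t ≤ 1/2, then 2·φ⁺(s,t) − 1 ≥ −(2·φ⁻(s,t) − 1). -/
import Mathlib

noncomputable section

/-- φ⁺(s,t) = s + t − 2st + 2√(st(1−s)(1−t)). -/
def phiPlus (s t : ℝ) : ℝ :=
  s + t - 2 * s * t + 2 * Real.sqrt (s * t * (1 - s) * (1 - t))

/-- φ⁻(s,t) = s + t − 2st − 2√(st(1−s)(1−t)). -/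
def phiMinus (s t : ℝ) : ℝ :=
  s + t - 2 * s * t - 2 * Real.sqrt (s * t * (1 - s) * (1 - t))

end

/-- explicit form of the limiting norm 2φ⁺(s,t) − 1 with s = (k+1)/(2k),
and the fact that for t ≤ 1/2 the norm is attained at the positive edge of the
support. -/
theorem ptranspose_norm_explicit (k : ℕ) (hk : 2 ≤ k) (t : ℝ)
    (ht : t ∈ Set.Icc (0 : ℝ) 1) :
    2 * phiPlus (((k : ℝ) + 1) / (2 * (k : ℝ))) t - 1 =
        (1 - 2 * t) / (k : ℝ) +
          2 * Real.sqrt ((1 - 1 / (k : ℝ) ^ 2) * t * (1 - t)) ∧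
    (t ≤ 1 / 2 →
      -(2 * phiMinus (((k : ℝ) + 1) / (2 * (k : ℝ))) t - 1) ≤
        2 * phiPlus (((k : ℝ) + 1) / (2 * (k : ℝ))) t - 1) := by
  obtain ⟨ht0, ht1⟩ := ht
  have hk1 : (1 : ℝ) ≤ (k : ℝ) := by exact_mod_cast Nat.one_le_of_lt hk
  have hkpos : (0 : ℝ) < (k : ℝ) := by linarith
  have hkne : (k : ℝ) ≠ 0 := ne_of_gt hkpos
  set s : ℝ := ((k : ℝ) + 1) / (2 * (k : ℝ)) with hs
  have hcoef : (1 : ℝ) - 1 / (k : ℝ) ^ 2 =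
      ((k : ℝ) ^ 2 - 1) / (k : ℝ) ^ 2 := by field_simp
  have hX : (0 : ℝ) ≤ (1 - 1 / (k : ℝ) ^ 2) * t * (1 - t) := by
    have h1 : (1 : ℝ) ≤ (k : ℝ) ^ 2 := by nlinarith
    have : (0 : ℝ) ≤ 1 - 1 / (k : ℝ) ^ 2 := by
      rw [sub_nonneg, div_le_one (by nlinarith)]
      linarith
    have := mul_nonneg (mul_nonneg this ht0) (by linarith : (0:ℝ) ≤ 1 - t)
    linarith [this]
  have hsqrt : Real.sqrt (s * t * (1 - s) * (1 - t)) =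
      Real.sqrt ((1 - 1 / (k : ℝ) ^ 2) * t * (1 - t)) / 2 := by
    have harg : s * t * (1 - s) * (1 - t) =
        ((1 - 1 / (k : ℝ) ^ 2) * t * (1 - t)) * (1 / 4) := by
      rw [hs]; field_simp; ring
    rw [harg, Real.sqrt_mul hX, show (1/4 : ℝ) = (1/2)^2 by norm_num,
      Real.sqrt_sq (by norm_num : (0:ℝ) ≤ 1/2)]
    ring
  have hlin : 2 * (s + t - 2 * s * t) - 1 = (1 - 2 * t) / (k : ℝ) := by
    rw [hs]; field_simp; ring
  constructor
  · unfold phiPlus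
    rw [hsqrt]; linarith [hlin]
  · intro ht2
    unfold phiPlus phiMinus
    have : (0 : ℝ) ≤ (1 - 2 * t) / (k : ℝ) :=
      div_nonneg (by linarith) (le_of_lt hkpos)
    nlinarith [hlin, Real.sqrt_nonneg (s * t * (1 - s) * (1 - t))]
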